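/- Let C be a ℤ-submodule of (ℤ/3ℤ)^n with dual code C^⊥ = {y ∈ (ℤ/3ℤ)^n : ∑ᵢ yᵢxᵢ = 0 for all x ∈ C}. Then for every real q with 0 ≤ q < 1, ∑_{x ∈ Λ_A(C^⊥)} q^{‖x‖₁} = (1/|C|) · ∑_{c ∈ C} ((1+q)/(1−q))^{n − |c|} ((1−q²)/(1+q+q²))^{|c|}, where |c| = #{i : cᵢ ≠ 0} is the Hamming weight of c. -/

import Mathlib

/-!
Writing `e(t) = exp(2πi t/3)`, character orthogonality on the finite group `C` gives
`1_{Λ_A(C^⊥)}(x) = |C|⁻¹ ∑_{c ∈ C} e(⟨x, c⟩)`. Inserting this into the absolutely convergent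
lattice sum and exchanging it with the finite sum over `C`, each summand factors over the
coordinates into one-dimensional Poisson-kernel sums
`∑_{m ∈ ℤ} q^|m| ζ^m = (1 - q²) / ((1 - qζ)(1 - qζ⁻¹))` with `ζ = e(cᵢ)`. For `cᵢ = 0` this is
`(1 + q) / (1 - q)`; otherwise `ζ + ζ⁻¹ = -1` and it is `(1 - q²) / (1 + q + q²)`.
-/

open Finset ZMod

section FinPiProduct

variable {α R : Type*} [NormedCommRing R] [NormOneClass R]

lemma summable_fin_pi_prod_of_nonneg {n : ℕ} {g : Fin n → α → ℝ} (hg : ∀ i, Summable (g i))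
    (hg0 : ∀ i a, 0 ≤ g i a) : Summable fun x : Fin n → α => ∏ i, g i (x i) := by
  induction n with
  | zero => exact .of_finite
  | succ n ih =>
    have htail := ih (fun i => hg i.succ) (fun i => hg0 i.succ)
    have hcons := (hg 0).mul_of_nonneg htail (hg0 0) fun x => prod_nonneg fun i _ => hg0 _ _
    rw [← (Fin.consEquiv fun _ => α).summable_iff]
    exact hcons.congr fun p => by simp [Fin.prod_univ_succ, Fin.consEquiv]

lemma summable_norm_fin_pi_prod {n : ℕ} {f : Fin n → α → R}
    (hf : ∀ i, Summable fun a => ‖f i a‖) : Summable fun x : Fin n → α => ‖∏ i, f i (x i)‖ :=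
  (summable_fin_pi_prod_of_nonneg hf fun _ _ => norm_nonneg _).of_nonneg_of_le
    (fun _ => norm_nonneg _) fun _ => Finset.norm_prod_le _ _

lemma tsum_fin_pi_prod [CompleteSpace R] {n : ℕ} {f : Fin n → α → R}
    (hf : ∀ i, Summable fun a => ‖f i a‖) :
    ∑' x : Fin n → α, ∏ i, f i (x i) = ∏ i, ∑' a, f i a := by
  induction n with
  | zero => simp
  | succ n ih =>
    rw [Fin.prod_univ_succ, ← ih (fun i => hf i.succ),
      tsum_mul_tsum_of_summable_norm (hf 0) (summable_norm_fin_pi_prod fun i => hf i.succ),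
      ← (Fin.consEquiv fun _ => α).tsum_eq]
    simp [Fin.prod_univ_succ, Fin.consEquiv]

end FinPiProduct

lemma summable_pow_natAbs {ρ : ℝ} (h0 : 0 ≤ ρ) (h1 : ρ < 1) :
    Summable fun m : ℤ => ρ ^ m.natAbs := by
  have h := summable_geometric_of_lt_one h0 h1
  apply Summable.of_nat_of_neg <;> exact h.congr fun k => by simp

lemma tsum_pow_natAbs_mul_zpow {r z : ℂ} (hr : ‖r‖ < 1) (hz : ‖z‖ = 1) :
    ∑' m : ℤ, r ^ m.natAbs * z ^ m = (1 - r ^ 2) / ((1 - r * z) * (1 - r * z⁻¹)) := by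
  have hz0 : z ≠ 0 := by rintro rfl; simp at hz
  have hrz : ‖r * z‖ < 1 := by rwa [norm_mul, hz, mul_one]
  have hrz' : ‖r * z⁻¹‖ < 1 := by rwa [norm_mul, norm_inv, hz, inv_one, mul_one]
  have hpos : HasSum (fun k : ℕ => r ^ (k : ℤ).natAbs * z ^ (k : ℤ)) (1 - r * z)⁻¹ :=
    (hasSum_geometric_of_norm_lt_one hrz).congr_fun fun k => by simp [mul_pow]
  have hneg : HasSum (fun k : ℕ => r ^ (-(k + 1) : ℤ).natAbs * z ^ (-(k + 1) : ℤ))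
      (r * z⁻¹ * (1 - r * z⁻¹)⁻¹) := by
    refine ((hasSum_geometric_of_norm_lt_one hrz').mul_left (r * z⁻¹)).congr_fun fun k => ?_
    rw [show (-(k + 1) : ℤ).natAbs = k + 1 by omega, zpow_neg, ← Nat.cast_succ, zpow_natCast,
      ← inv_pow, pow_succ, pow_succ]
    ring
  rw [(HasSum.of_nat_of_neg_add_one (f := fun m : ℤ => r ^ m.natAbs * z ^ m) hpos hneg).tsum_eq]
  have h1 : 1 - r * z ≠ 0 := sub_ne_zero.2 fun h => by simp [← h] at hrz
  have h2 : 1 - r * z⁻¹ ≠ 0 := sub_ne_zero.2 fun h => by simp [← h] at hrz'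
  rw [← show r * z * (r * z⁻¹) = r ^ 2 by field_simp]
  generalize r * z = a at h1
  generalize r * z⁻¹ = b at h2
  field_simp
  ring

lemma AddChar.map_sum_eq_prod {A M ι : Type*} [AddCommMonoid A] [CommMonoid M]
    (ψ : AddChar A M) (s : Finset ι) (f : ι → A) : ψ (∑ i ∈ s, f i) = ∏ i ∈ s, ψ (f i) := by
  classical
  induction s using Finset.induction with
  | empty => simp
  | insert i s hi ih => rw [sum_insert hi, prod_insert hi, AddChar.map_add_eq_mul, ih]

section ConstructionA

variable {N n : ℕ}

def constructionADual (C : Submodule ℤ (Fin n → ZMod N)) : Set (Fin n → ℤ) :=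
  {x | ∀ z ∈ C, ∑ i, (x i : ZMod N) * z i = 0}

variable [NeZero N]

lemma norm_stdAddChar (a : ZMod N) : ‖stdAddChar a‖ = 1 := Circle.norm_coe _

lemma stdAddChar_eq_one_iff {a : ZMod N} : stdAddChar a = 1 ↔ a = 0 := by
  rw [← AddChar.map_zero_eq_one (stdAddChar (N := N)), injective_stdAddChar.eq_iff]

lemma sum_stdAddChar_eq_indicator (C : Submodule ℤ (Fin n → ZMod N)) [Fintype C]
    (x : Fin n → ℤ) :
    ∑ c : C, stdAddChar (∑ i, (x i : ZMod N) * c.1 i)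
      = (constructionADual C).indicator (fun _ => (Fintype.card C : ℂ)) x := by
  classical
  let L : C →+ ZMod N :=
    AddMonoidHom.mk' (fun c => ∑ i, (x i : ZMod N) * c.1 i) fun a b => by
      simp [mul_add, sum_add_distrib]
  have hL : stdAddChar.compAddMonoidHom L = 0 ↔ x ∈ constructionADual C := by
    simp [AddChar.eq_zero_iff, stdAddChar_eq_one_iff, constructionADual, L]
  rw [Set.indicator_apply, ← if_congr hL rfl rfl, ← AddChar.sum_eq_ite]
  rfl

lemma tsum_constructionADual_prod_eq (C : Submodule ℤ (Fin n → ZMod N))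
    [Fintype C] {f : ℤ → ℂ} (hf : Summable fun m => ‖f m‖) :
    ∑' x : constructionADual C, ∏ i, f (x.1 i)
      = (Fintype.card C : ℂ)⁻¹ *
        ∑ c : C, ∏ i, ∑' m : ℤ, f m * stdAddChar ((m : ZMod N) * c.1 i) := by
  have hcard : (Fintype.card C : ℂ) ≠ 0 := Nat.cast_ne_zero.2 Fintype.card_ne_zero
  have hfactor : ∀ (c : C) (x : Fin n → ℤ),
      (∏ i, f (x i)) * stdAddChar (∑ i, (x i : ZMod N) * c.1 i)
        = ∏ i, f (x i) * stdAddChar ((x i : ZMod N) * c.1 i) := by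
    intro c x
    rw [AddChar.map_sum_eq_prod, prod_mul_distrib]
  have hnorm : ∀ (c : C) i, Summable fun m : ℤ =>
      ‖f m * stdAddChar ((m : ZMod N) * c.1 i)‖ :=
    fun c i => by simpa [norm_stdAddChar] using hf
  calc ∑' x : constructionADual C, ∏ i, f (x.1 i)
      = ∑' x, (constructionADual C).indicator (fun x => ∏ i, f (x i)) x :=
        _root_.tsum_subtype (constructionADual C) fun x => ∏ i, f (x i)
    _ = ∑' x : Fin n → ℤ, (Fintype.card C : ℂ)⁻¹ *
          ∑ c : C, ∏ i, f (x i) * stdAddChar ((x i : ZMod N) * c.1 i) := by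
        refine tsum_congr fun x => ?_
        simp_rw [← hfactor, ← mul_sum]
        rw [sum_stdAddChar_eq_indicator]
        by_cases hx : x ∈ constructionADual C
        · simp only [Set.indicator_of_mem hx]
          field_simp
        · simp [hx]
    _ = (Fintype.card C : ℂ)⁻¹ *
          ∑ c : C, ∑' x : Fin n → ℤ, ∏ i, f (x i) * stdAddChar ((x i : ZMod N) * c.1 i) := by
        rw [tsum_mul_left, Summable.tsum_finsetSum fun c _ =>
          (summable_norm_fin_pi_prod (hnorm c)).of_norm]
    _ = _ := by simp_rw [tsum_fin_pi_prod (hnorm _)]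

end ConstructionA

lemma stdAddChar_add_inv_of_ne_zero {a : ZMod 3} (ha : a ≠ 0) :
    stdAddChar a + (stdAddChar a)⁻¹ = -1 := by
  have hsum : ∑ b : ZMod 3, stdAddChar b = 0 := by
    rw [AddChar.sum_eq_zero_iff_ne_zero, Ne, AddChar.eq_zero_iff]
    exact fun h => one_ne_zero (stdAddChar_eq_one_iff.1 (h 1))
  rw [show ∑ b : ZMod 3, stdAddChar b
      = stdAddChar (0 : ZMod 3) + stdAddChar (1 : ZMod 3) + stdAddChar (2 : ZMod 3) from
    Fin.sum_univ_three _, AddChar.map_zero_eq_one] at hsum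
  rw [← AddChar.map_neg_eq_inv]
  obtain rfl | rfl : a = 1 ∨ a = 2 := by revert a; decide
  · rw [show (-1 : ZMod 3) = 2 from rfl]
    linear_combination hsum
  · rw [show (-2 : ZMod 3) = 1 from rfl]
    linear_combination hsum

lemma tsum_pow_natAbs_mul_stdAddChar {r : ℂ} (hr : ‖r‖ < 1) (a : ZMod 3) :
    ∑' m : ℤ, r ^ m.natAbs * stdAddChar ((m : ZMod 3) * a)
      = if a = 0 then (1 + r) / (1 - r) else (1 - r ^ 2) / (1 + r + r ^ 2) := by
  simp_rw [← zsmul_eq_mul, AddChar.map_zsmul_eq_zpow]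
  rw [tsum_pow_natAbs_mul_zpow hr (norm_stdAddChar a)]
  have h1 : 1 - r ≠ 0 := sub_ne_zero.2 fun h => by simp [← h] at hr
  split_ifs with ha
  · rw [ha, AddChar.map_zero_eq_one, inv_one, mul_one]
    field_simp
    ring
  · have hψ : stdAddChar a ≠ 0 := fun h => by simpa [h] using norm_stdAddChar a
    rw [show (1 - r * stdAddChar a) * (1 - r * (stdAddChar a)⁻¹) = 1 + r + r ^ 2 by
      linear_combination (-r) * stdAddChar_add_inv_of_ne_zero ha + r ^ 2 * mul_inv_cancel₀ hψ]

lemma prod_ite_eq_zero_eq_pow_mul_pow {ι R M : Type*} [Fintype ι] [Zero R] [DecidableEq R]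
    [CommMonoid M] (c : ι → R) (a b : M) :
    ∏ i, (if c i = 0 then a else b)
      = a ^ (Fintype.card ι - #{i | c i ≠ 0}) * b ^ #{i | c i ≠ 0} := by
  have hcard := card_filter_add_card_filter_not (s := univ) fun i => c i = 0
  rw [card_univ] at hcard
  rw [prod_ite, prod_const, prod_const]
  simp only [ne_eq]
  congr 2
  omega

/-- Theorem: ℓ¹-theta function of the Construction A lattice of the dual of a
ternary code, via the Hamming weight enumerator. -/
theorem theta_one_constructionA_ternary_dual
    (n : ℕ) (C : Submodule ℤ (Fin n → ZMod 3))
    (q : ℝ) (hq0 : 0 ≤ q) (hq1 : q < 1) :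
    (∑' x : {x : Fin n → ℤ //
        ∀ z ∈ C, ∑ i, ((x i : ℤ) : ZMod 3) * z i = 0},
        q ^ (∑ i, (x.val i).natAbs))
      = (1 / (Nat.card C : ℝ)) *
        ∑' c : C,
          ((1 + q) / (1 - q)) ^ (n - (Finset.univ.filter
              fun i => ((c : Fin n → ZMod 3)) i ≠ 0).card) *
          ((1 - q ^ 2) / (1 + q + q ^ 2)) ^ (Finset.univ.filter
              fun i => ((c : Fin n → ZMod 3)) i ≠ 0).card := by
  classical
  have hq : ‖(q : ℂ)‖ < 1 := by rwa [Complex.norm_real, Real.norm_of_nonneg hq0]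
  have hsummable : Summable fun m : ℤ => ‖(q : ℂ) ^ m.natAbs‖ := by
    simpa [norm_pow] using summable_pow_natAbs (norm_nonneg _) hq
  apply Complex.ofReal_injective
  calc _ = ∑' x : constructionADual C, ∏ i, (q : ℂ) ^ (x.1 i).natAbs := by
          rw [Complex.ofReal_tsum]
          push_cast [prod_pow_eq_pow_sum]
          rfl
    _ = _ := by
      rw [tsum_constructionADual_prod_eq C hsummable]
      simp_rw [tsum_pow_natAbs_mul_stdAddChar hq, prod_ite_eq_zero_eq_pow_mul_pow,
        Fintype.card_fin]
      push_cast [tsum_fintype, Nat.card_eq_fintype_card]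
      ring
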